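/- Let s₁, …, sₙ be strictly positive real numbers, β > 0, and ε₁, …, εₙ i.i.d. Gumbel(0, β⁻¹). Then the index maximizing log(sᵢ) + εᵢ is distributed according to the power distribution: P(argmax = i) = sᵢ^β / ∑ⱼ sⱼ^β. -/

import Mathlib

/-!
With `F x = exp (-exp (-β x))` the CDF of `Gumbel(0, β⁻¹)`, the variables `Uⱼ = F (εⱼ)` are
independent and uniform on `(0, 1]` (probability integral transform), and since
`F (x + c) = F x ^ exp (-β c)` the event becomes `Uⱼ < Uᵢ ^ (sⱼ^β / sᵢ^β)` for all `j ≠ i`.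
Conditionally on `Uᵢ = x` this has probability `x ^ R` with `R = ∑_{j ≠ i} sⱼ^β / sᵢ^β`, and
`∫₀¹ x ^ R dx = (1 + R)⁻¹ = sᵢ^β / ∑ⱼ sⱼ^β`.
-/

open MeasureTheory

/-- `G` is Gumbel distributed with location `μ` and scale `β` under `P`. -/
def IsGumbel {Ω : Type*} [MeasurableSpace Ω] (P : Measure Ω) (G : Ω → ℝ) (μ β : ℝ) : Prop :=
  ∀ g : ℝ, P {ω | G ω ≤ g} = ENNReal.ofReal (Real.exp (-Real.exp (-(g - μ) / β)))

open ProbabilityTheory Real Set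

lemma lintegral_Ioc_zero_one_rpow {r : ℝ} (hr : -1 < r) :
    ∫⁻ x in Ioc (0 : ℝ) 1, ENNReal.ofReal (x ^ r) = ENNReal.ofReal (r + 1)⁻¹ := by
  have hint : IntegrableOn (fun x : ℝ => x ^ r) (Ioc 0 1) :=
    (intervalIntegral.intervalIntegrable_rpow' hr).1
  rw [← ofReal_integral_eq_lintegral_ofReal hint
      ((ae_restrict_iff' measurableSet_Ioc).2 (ae_of_all _ fun x hx => rpow_nonneg hx.1.le r)),
    ← intervalIntegral.integral_of_le zero_le_one, integral_rpow (Or.inl hr),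
    zero_rpow (by linarith), one_rpow, sub_zero, one_div]

lemma volume_restrict_Ioc_zero_one_Iio {t : ℝ} (ht : t ≤ 1) :
    volume.restrict (Ioc (0 : ℝ) 1) (Iio t) = ENNReal.ofReal t := by
  have : Iio t ∩ Ioc (0 : ℝ) 1 = Ioo 0 t := by
    ext x; simp only [mem_inter_iff, mem_Iio, mem_Ioc, mem_Ioo]
    constructor
    · rintro ⟨hxt, hx0, -⟩; exact ⟨hx0, hxt⟩
    · rintro ⟨hx0, hxt⟩; exact ⟨hxt, hx0, by linarith⟩
  rw [Measure.restrict_apply measurableSet_Iio, this, volume_Ioo, sub_zero]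

section UniformRace

variable {ι Ω : Type*} [Fintype ι] [DecidableEq ι] [MeasurableSpace Ω] {P : Measure Ω}
  [IsProbabilityMeasure P]

theorem measure_forall_lt_rpow_of_uniform {U : ι → Ω → ℝ} (hmeas : ∀ j, Measurable (U j))
    (hindep : iIndepFun U P) (hunif : ∀ j, P.map (U j) = volume.restrict (Ioc 0 1))
    {r : ι → ℝ} (hr : ∀ j, 0 ≤ r j) (i : ι) :
    P {ω | ∀ j, j ≠ i → U j ω < U i ω ^ r j} =
      ENNReal.ofReal (1 + ∑ j ∈ Finset.univ.erase i, r j)⁻¹ := by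
  set T := Finset.univ.erase i
  set Y : Ω → T → ℝ := fun ω k => U k ω
  have hY : Measurable Y := measurable_pi_lambda _ fun k => hmeas k
  have hYindep : iIndepFun (fun (k : T) => U k) P := hindep.precomp Subtype.val_injective
  have hUY : IndepFun (U i) Y P := by
    have := (hindep.indepFun_finset {i} T (by simp [T]) hmeas).comp
      (measurable_pi_apply ⟨i, Finset.mem_singleton_self i⟩) measurable_id
    exact this
  set S : Set (ℝ × (T → ℝ)) := {p | ∀ k, p.2 k < p.1 ^ r k}
  have hS : MeasurableSet S := by
    simp only [S, ofPred_forall]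
    exact MeasurableSet.iInter fun k => measurableSet_lt (by fun_prop) (by fun_prop)
  have hevent : {ω | ∀ j, j ≠ i → U j ω < U i ω ^ r j} = (fun ω => (U i ω, Y ω)) ⁻¹' S := by
    ext ω
    simp [S, Y, T]
  have hslice : ∀ x ∈ Ioc (0 : ℝ) 1,
      P.map Y (Prod.mk x ⁻¹' S) = ENNReal.ofReal (x ^ ∑ j ∈ T, r j) := by
    intro x hx
    have hpre : Y ⁻¹' (Prod.mk x ⁻¹' S) = ⋂ k : T, U k ⁻¹' Iio (x ^ r k) := by
      ext ω; simp [S, Y]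
    rw [Measure.map_apply hY (measurable_prodMk_left hS), hpre,
      hYindep.meas_iInter fun k => ⟨_, measurableSet_Iio, rfl⟩,
      ← Finset.sum_coe_sort T, rpow_sum_of_pos hx.1,
      ENNReal.ofReal_prod_of_nonneg fun k _ => (rpow_pos_of_pos hx.1 _).le]
    refine Finset.prod_congr rfl fun k _ => ?_
    rw [← Measure.map_apply (hmeas k) measurableSet_Iio, hunif k,
      volume_restrict_Ioc_zero_one_Iio (rpow_le_one hx.1.le hx.2 (hr k))]
  have hrsum : -1 < ∑ j ∈ T, r j := by
    linarith [Finset.sum_nonneg fun j (_ : j ∈ T) => hr j]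
  calc P {ω | ∀ j, j ≠ i → U j ω < U i ω ^ r j}
      = (P.map (U i)).prod (P.map Y) S := by
        rw [← (indepFun_iff_map_prod_eq_prod_map_map (hmeas i).aemeasurable
          hY.aemeasurable).1 hUY, Measure.map_apply ((hmeas i).prodMk hY) hS, hevent]
    _ = ∫⁻ x in Ioc 0 1, ENNReal.ofReal (x ^ ∑ j ∈ T, r j) := by
        rw [Measure.prod_apply hS, hunif i]
        exact setLIntegral_congr_fun measurableSet_Ioc hslice
    _ = ENNReal.ofReal (1 + ∑ j ∈ T, r j)⁻¹ := by
        rw [lintegral_Ioc_zero_one_rpow hrsum, add_comm]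

end UniformRace

noncomputable def gumbelCDF (β x : ℝ) : ℝ := exp (-exp (-(β * x)))

lemma continuous_gumbelCDF (β : ℝ) : Continuous (gumbelCDF β) := by
  unfold gumbelCDF; fun_prop

lemma strictMono_gumbelCDF {β : ℝ} (hβ : 0 < β) : StrictMono (gumbelCDF β) := fun x y hxy => by
  unfold gumbelCDF
  gcongr

lemma gumbelCDF_mem_Ioo (β x : ℝ) : gumbelCDF β x ∈ Ioo 0 1 :=
  ⟨exp_pos _, exp_lt_one_iff.2 (neg_neg_of_pos (exp_pos _))⟩

lemma gumbelCDF_add (β x c : ℝ) : gumbelCDF β (x + c) = gumbelCDF β x ^ exp (-(β * c)) := by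
  rw [gumbelCDF, gumbelCDF, ← exp_mul, mul_add, neg_add, exp_add]
  ring_nf

lemma gumbelCDF_neg_log_neg_log_div {β : ℝ} (hβ : 0 < β) {u : ℝ} (hu : u ∈ Ioo 0 1) :
    gumbelCDF β (-log (-log u) / β) = u := by
  have hlog : 0 < -log u := neg_pos.2 (log_neg hu.1 hu.2)
  rw [gumbelCDF, mul_div_cancel₀ _ hβ.ne', neg_neg, exp_log hlog, neg_neg, exp_log hu.1]

section IsGumbel

variable {Ω : Type*} [MeasurableSpace Ω] {P : Measure Ω} {X : Ω → ℝ} {β : ℝ}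

lemma IsGumbel.measure_le (h : IsGumbel P X 0 β⁻¹) (g : ℝ) :
    P {ω | X ω ≤ g} = ENNReal.ofReal (gumbelCDF β g) := by
  rw [h g, gumbelCDF, div_inv_eq_mul, sub_zero, neg_mul, mul_comm]

lemma IsGumbel.map_gumbelCDF [IsProbabilityMeasure P] (hβ : 0 < β) (hX : Measurable X)
    (h : IsGumbel P X 0 β⁻¹) : P.map (gumbelCDF β ∘ X) = volume.restrict (Ioc 0 1) := by
  have hmeas := (continuous_gumbelCDF β).measurable.comp hX
  refine Measure.ext_of_Iic _ _ fun u => ?_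
  rw [Measure.map_apply hmeas measurableSet_Iic, Measure.restrict_apply measurableSet_Iic]
  rcases lt_or_ge u 1 with hu1 | hu1
  · rw [Iic_inter_Ioc_of_le hu1.le, volume_Ioc, sub_zero]
    rcases le_or_gt u 0 with hu0 | hu0
    · have hP : gumbelCDF β ∘ X ⁻¹' Iic u = ∅ :=
        eq_empty_of_forall_notMem fun ω (hω : gumbelCDF β (X ω) ≤ u) => by
          linarith [(gumbelCDF_mem_Ioo β (X ω)).1]
      rw [hP, measure_empty, ENNReal.ofReal_of_nonpos hu0]
    · have hq := gumbelCDF_neg_log_neg_log_div hβ ⟨hu0, hu1⟩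
      have hP : gumbelCDF β ∘ X ⁻¹' Iic u = {ω | X ω ≤ -log (-log u) / β} := by
        ext ω
        simp only [mem_preimage, Function.comp_apply, mem_Iic, mem_ofPred_eq]
        nth_rw 1 [← hq]
        exact (strictMono_gumbelCDF hβ).le_iff_le
      rw [hP, h.measure_le, hq]
  · have hP : gumbelCDF β ∘ X ⁻¹' Iic u = univ :=
      eq_univ_of_forall fun ω => (gumbelCDF_mem_Ioo β (X ω)).2.le.trans hu1
    rw [hP, measure_univ, inter_eq_right.2 (Ioc_subset_Iic_self.trans (Iic_subset_Iic.2 hu1)),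
      volume_Ioc, sub_zero, ENNReal.ofReal_one]

end IsGumbel

lemma log_add_lt_log_add_iff {β a b x y : ℝ} (hβ : 0 < β) (ha : 0 < a) (hb : 0 < b) :
    log a + x < log b + y ↔ gumbelCDF β x < gumbelCDF β y ^ (a ^ β / b ^ β) := by
  have hpow : a ^ β / b ^ β = exp (-(β * (log b - log a))) := by
    rw [rpow_def_of_pos ha, rpow_def_of_pos hb, ← exp_sub]
    ring_nf
  rw [hpow, ← gumbelCDF_add, (strictMono_gumbelCDF hβ).lt_iff_lt]
  constructor <;> intro h <;> linarith

theorem gumbel_power_acquisition {Ω : Type*} [MeasurableSpace Ω] (P : Measure Ω)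
    [IsProbabilityMeasure P] (n : ℕ) (s : Fin n → ℝ) (hs : ∀ i, 0 < s i)
    (β : ℝ) (hβ : 0 < β) (ε : Fin n → Ω → ℝ) (hmeas : ∀ i, Measurable (ε i))
    (hindep : ProbabilityTheory.iIndepFun ε P)
    (hgumbel : ∀ i, IsGumbel P (ε i) 0 β⁻¹) (i : Fin n) :
    P {ω | ∀ j, j ≠ i → Real.log (s j) + ε j ω < Real.log (s i) + ε i ω} =
      ENNReal.ofReal (s i ^ β / ∑ j, s j ^ β) := by
  set U : Fin n → Ω → ℝ := fun j => gumbelCDF β ∘ ε j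
  have hevent : {ω | ∀ j, j ≠ i → log (s j) + ε j ω < log (s i) + ε i ω} =
      {ω | ∀ j, j ≠ i → U j ω < U i ω ^ (s j ^ β / s i ^ β)} := by
    ext ω
    simp only [mem_ofPred_eq, U, Function.comp_apply, log_add_lt_log_add_iff hβ (hs _) (hs i)]
  have hsi : 0 < s i ^ β := rpow_pos_of_pos (hs i) β
  rw [hevent, measure_forall_lt_rpow_of_uniform
    (fun j => (continuous_gumbelCDF β).measurable.comp (hmeas j))
    (hindep.comp _ fun _ => (continuous_gumbelCDF β).measurable)
    (fun j => (hgumbel j).map_gumbelCDF hβ (hmeas j))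
    (fun j => div_nonneg (rpow_nonneg (hs j).le β) hsi.le) i,
    ← Finset.add_sum_erase _ _ (Finset.mem_univ i), ← Finset.sum_div, one_add_div hsi.ne',
    inv_div]
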